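/- arXiv:2405.18031 — 6 statements merged into one kernel-verified Lean document; each statement's English description precedes it below -/
import Mathlib

section
/- Let d,n ≥ 1, M ≥ 0, let each f_i : ℝ^d → ℝ (i = 1,…,n) be convex and M-Lipschitz, let r_x, r_yz > 0 and set r = r_x + 1/r_yz. Then inf_{x ∈ (ℝ^d)^n} sup_{y ∈ (ℝ^d)^n} sup_{z ∈ L⊥} Q(x,y,z) = n · inf_{x ∈ ℝ^d} p(x), and the infimum on the right-hand side is attained. -/
/-!
On the diagonal `L`, every `z ∈ L⊥` is orthogonal to `x`, so `Q x y z` depends on `(y, z)` only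
through `w = y + z`, and maximizing the concave quadratic `-⟪w, x⟫ - (r_yz/2)‖w‖²` gives
`F x + ‖x‖²/(2 r_yz) = n p(x̄)`. Off the diagonal, moving `z` along the `L⊥`-component of `x`
(and `y` oppositely) makes `Q` unbounded above. So the min-max value is `n · min p`, and the
minimum exists because `p` is continuous and grows quadratically: the Lipschitz terms grow at
most linearly.
-/

open scoped BigOperators RealInnerProductSpace

noncomputable section

/-- `(ℝ^d)^n` with the Euclidean (ℓ²-product) norm. -/
abbrev Vec (d n : ℕ) := PiLp 2 (fun _ : Fin n => EuclideanSpace ℝ (Fin d))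

open Filter WithLp

section Minimizer

variable {E : Type*} [NormedAddCommGroup E]

lemma continuous_of_abs_sub_le_mul_norm {g : E → ℝ} {M : ℝ}
    (hg : ∀ x x', |g x - g x'| ≤ M * ‖x - x'‖) : Continuous g :=
  (LipschitzWith.of_dist_le_mul (K := M.toNNReal) fun x x' =>
    (hg x x').trans <| by
      rw [Real.coe_toNNReal', dist_eq_norm]
      exact mul_le_mul_of_nonneg_right (le_max_left M 0) (norm_nonneg _)).continuous

lemma sub_mul_norm_le_of_abs_sub_le_mul_norm {g : E → ℝ} {M : ℝ}
    (hg : ∀ x x', |g x - g x'| ≤ M * ‖x - x'‖) (x : E) : g 0 - M * ‖x‖ ≤ g x := by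
  have := (abs_le.mp (hg x 0)).1
  rw [sub_zero] at this
  linarith

lemma tendsto_cocompact_atTop_of_quadratic_le [ProperSpace E] {g : E → ℝ} {a b c : ℝ}
    (hc : 0 < c) (hg : ∀ x, a - b * ‖x‖ + c * ‖x‖ ^ 2 ≤ g x) :
    Tendsto g (cocompact E) atTop := by
  have hquad : Tendsto (fun t : ℝ => t * (c * t - b) + a) atTop atTop :=
    tendsto_atTop_add_const_right _ a <| tendsto_id.atTop_mul_atTop₀ <|
      tendsto_atTop_add_const_right _ (-b) (tendsto_id.const_mul_atTop hc)
  refine tendsto_atTop_mono (fun x => ?_) (hquad.comp tendsto_norm_cocompact_atTop)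
  have := hg x
  simp only [Function.comp_apply]
  linarith

lemma exists_forall_le_mul_sum_add_mul_sq_norm [ProperSpace E] {ι : Type*} [Fintype ι]
    (f : ι → E → ℝ) {M w c : ℝ} (hlip : ∀ i x x', |f i x - f i x'| ≤ M * ‖x - x'‖)
    (hw : 0 ≤ w) (hc : 0 < c) :
    ∃ x₀, ∀ x, w * ∑ i, f i x₀ + c * ‖x₀‖ ^ 2 ≤ w * ∑ i, f i x + c * ‖x‖ ^ 2 := by
  have hcont : Continuous fun x => w * ∑ i, f i x + c * ‖x‖ ^ 2 := by
    have := fun i => continuous_of_abs_sub_le_mul_norm (hlip i)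
    fun_prop
  refine hcont.exists_forall_le (tendsto_cocompact_atTop_of_quadratic_le
    (a := w * ∑ i, f i 0) (b := w * (Fintype.card ι * M)) hc fun x => ?_)
  have hsum : ∑ i, (f i 0 - M * ‖x‖) ≤ ∑ i, f i x := Finset.sum_le_sum fun i _ =>
    sub_mul_norm_le_of_abs_sub_le_mul_norm (hlip i) x
  rw [Finset.sum_sub_distrib, Finset.sum_const, Finset.card_univ, nsmul_eq_mul] at hsum
  nlinarith [mul_le_mul_of_nonneg_left hsum hw]

end Minimizer

section Quadratic

variable {H : Type*} [NormedAddCommGroup H] [InnerProductSpace ℝ H]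

lemma sub_inner_sub_mul_sq_norm_add_le {s : ℝ} (hs : 0 < s) {x z : H} (hzx : ⟪z, x⟫ = 0)
    (a : ℝ) (y : H) : a - ⟪y, x⟫ - s / 2 * ‖y + z‖ ^ 2 ≤ a + ‖x‖ ^ 2 / (2 * s) := by
  have hy : ⟪y, x⟫ = ⟪y + z, x⟫ := by rw [inner_add_left, hzx, add_zero]
  have h := sq_nonneg ‖s • (y + z) + x‖
  rw [norm_add_sq_real, norm_smul, real_inner_smul_left, Real.norm_eq_abs, abs_of_pos hs,
    mul_pow] at h
  rw [hy, add_div' _ _ _ (by positivity), le_div_iff₀ (by positivity)]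
  nlinarith

lemma exists_le_sub_inner_sub_mul_sq_norm {u w : H} (huw : ⟪u, w⟫ = 0) {s : ℝ} (hs : 0 < s)
    {a c : ℝ} (hw : w = 0 → c ≤ a + ‖u‖ ^ 2 / (2 * s)) :
    ∃ (y : H) (t : ℝ), c ≤ a - ⟪y, u + w⟫ - s / 2 * ‖y + t • w‖ ^ 2 := by
  -- `y = -s⁻¹ • u - t • w` is optimal along `u`; the value is then affine in `t` with slope `‖w‖²`
  have hval : ∀ t : ℝ, a - ⟪-(s⁻¹ • u) - t • w, u + w⟫ - s / 2 * ‖-(s⁻¹ • u) - t • w + t • w‖ ^ 2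
      = a + ‖u‖ ^ 2 / (2 * s) + t * ‖w‖ ^ 2 := by
    intro t
    have hwu : ⟪w, u⟫ = 0 := by rw [real_inner_comm]; exact huw
    simp only [sub_add_cancel, norm_neg, norm_smul, inner_sub_left, inner_neg_left,
      inner_add_right, real_inner_smul_left, huw, hwu,
      real_inner_self_eq_norm_sq, Real.norm_eq_abs, abs_of_pos (inv_pos.mpr hs)]
    field_simp
    ring
  suffices ∃ t : ℝ, c ≤ a + ‖u‖ ^ 2 / (2 * s) + t * ‖w‖ ^ 2 by
    obtain ⟨t, ht⟩ := this
    exact ⟨_, t, ht.trans (hval t).ge⟩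
  by_cases hw0 : w = 0
  · exact ⟨0, by simpa using hw hw0⟩
  · refine ⟨(c - a - ‖u‖ ^ 2 / (2 * s)) / ‖w‖ ^ 2, ?_⟩
    rw [div_mul_cancel₀ _ (by positivity)]
    linarith

end Quadratic

section Diagonal

variable {ι E : Type*} [Fintype ι] [NormedAddCommGroup E] [InnerProductSpace ℝ E]

lemma inner_toLp_const (z : PiLp 2 fun _ : ι => E) (v : E) :
    ⟪z, toLp 2 (Function.const ι v)⟫ = ⟪∑ i, z i, v⟫ := by
  simp [PiLp.inner_apply, sum_inner]

lemma norm_toLp_const_sq (v : E) :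
    ‖(toLp 2 (Function.const ι v) : PiLp 2 fun _ : ι => E)‖ ^ 2 = Fintype.card ι * ‖v‖ ^ 2 := by
  rw [← real_inner_self_eq_norm_sq, inner_toLp_const]
  simp [← Nat.cast_smul_eq_nsmul ℝ, real_inner_smul_left]

lemma sum_sub_toLp_const_smul_sum (x : PiLp 2 fun _ : ι => E) {c : ℝ}
    (hc : Fintype.card ι * c = 1) :
    ∑ i, (x - toLp 2 (Function.const ι (c • ∑ i, x i))) i = 0 := by
  simp [Finset.sum_sub_distrib, ← Nat.cast_smul_eq_nsmul ℝ, smul_smul, hc]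

end Diagonal

lemma iInf_iSup_iSup_coe_eq {α β γ : Type*} {Q : α → β → γ → ℝ} {c : ℝ} (x₀ : α)
    (hup : ∀ y z, Q x₀ y z ≤ c) (hlow : ∀ x, ∃ y z, c ≤ Q x y z) :
    ⨅ x, ⨆ y, ⨆ z, (Q x y z : EReal) = c := by
  refine le_antisymm (iInf_le_of_le x₀ <| iSup₂_le fun y z => EReal.coe_le_coe_iff.mpr (hup y z))
    (le_iInf fun x => ?_)
  obtain ⟨y, z, h⟩ := hlow x
  exact le_iSup₂_of_le (f := fun y z => (Q x y z : EReal)) y z (EReal.coe_le_coe_iff.mpr h)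

theorem stmt0_general (d n : ℕ) (hn : 1 ≤ n) (M : ℝ)
    (f : Fin n → EuclideanSpace ℝ (Fin d) → ℝ)
    (hlip : ∀ i x x', |f i x - f i x'| ≤ M * ‖x - x'‖)
    (rx ryz : ℝ) (hrx : 0 < rx) (hryz : 0 < ryz)
    (r : ℝ) (hr : r = rx + 1 / ryz)
    (F : Vec d n → ℝ) (hF : ∀ x, F x = (∑ i, f i (x i)) + (rx / 2) * ‖x‖ ^ 2)
    (G : Vec d n → Vec d n → ℝ) (hG : ∀ y z, G y z = (ryz / 2) * ‖y + z‖ ^ 2)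
    (Q : Vec d n → Vec d n → Vec d n → ℝ)
    (hQ : ∀ x y z, Q x y z = F x - ⟪y, x⟫ - G y z)
    (p : EuclideanSpace ℝ (Fin d) → ℝ)
    (hp : ∀ x, p x = (n : ℝ)⁻¹ * (∑ i, f i x) + (r / 2) * ‖x‖ ^ 2) :
    ∃ xstar : EuclideanSpace ℝ (Fin d), (∀ x, p xstar ≤ p x) ∧
      (⨅ x : Vec d n, ⨆ y : Vec d n, ⨆ z : {z : Vec d n // ∑ i, z i = 0},
          ((Q x y z.1 : ℝ) : EReal)) = (((n : ℝ) * p xstar : ℝ) : EReal) := by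
  have hn0 : (n : ℝ) ≠ 0 := by positivity
  obtain ⟨xstar, hmin⟩ : ∃ xstar, ∀ x, p xstar ≤ p x := by
    simp only [hp]
    exact exists_forall_le_mul_sum_add_mul_sq_norm f hlip (by positivity) (by rw [hr]; positivity)
  have hdiag : ∀ v, F (toLp 2 (Function.const _ v))
      + ‖(toLp 2 (Function.const _ v) : Vec d n)‖ ^ 2 / (2 * ryz) = n * p v := by
    intro v
    rw [hF, hp, hr, norm_toLp_const_sq, Fintype.card_fin]
    simp only [Function.const_apply]
    field_simp
    ring
  refine ⟨xstar, hmin, iInf_iSup_iSup_coe_eq (toLp 2 (Function.const _ xstar))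
    (fun y z => ?_) (fun x => ?_)⟩
  · rw [hQ, hG, ← hdiag]
    exact sub_inner_sub_mul_sq_norm_add_le hryz (by rw [inner_toLp_const, z.2, inner_zero_left]) _ y
  · set u : Vec d n := toLp 2 (Function.const _ ((n : ℝ)⁻¹ • ∑ i, x i))
    have hw : ∑ i, (x - u) i = 0 :=
      sum_sub_toLp_const_smul_sum x (by rw [Fintype.card_fin, mul_inv_cancel₀ hn0])
    have huw : ⟪u, x - u⟫ = 0 := by rw [real_inner_comm, inner_toLp_const, hw, inner_zero_left]
    obtain ⟨y, t, hle⟩ := exists_le_sub_inner_sub_mul_sq_norm huw hryz (a := F x)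
      (c := n * p xstar) fun h => by
        rw [sub_eq_zero.mp h, hdiag]
        exact mul_le_mul_of_nonneg_left (hmin _) (by positivity)
    refine ⟨y, ⟨t • (x - u), by simp only [PiLp.smul_apply, ← Finset.smul_sum, hw, smul_zero]⟩, ?_⟩
    rw [hQ, hG]
    simpa using hle

theorem stmt0 (d n : ℕ) (hd : 1 ≤ d) (hn : 1 ≤ n) (M : ℝ) (hM : 0 ≤ M)
    (f : Fin n → EuclideanSpace ℝ (Fin d) → ℝ)
    (hconv : ∀ i, ConvexOn ℝ Set.univ (f i))
    (hlip : ∀ i x x', |f i x - f i x'| ≤ M * ‖x - x'‖)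
    (rx ryz : ℝ) (hrx : 0 < rx) (hryz : 0 < ryz)
    (r : ℝ) (hr : r = rx + 1 / ryz)
    (F : Vec d n → ℝ) (hF : ∀ x, F x = (∑ i, f i (x i)) + (rx / 2) * ‖x‖ ^ 2)
    (G : Vec d n → Vec d n → ℝ) (hG : ∀ y z, G y z = (ryz / 2) * ‖y + z‖ ^ 2)
    (Q : Vec d n → Vec d n → Vec d n → ℝ)
    (hQ : ∀ x y z, Q x y z = F x - ⟪y, x⟫ - G y z)
    (p : EuclideanSpace ℝ (Fin d) → ℝ)
    (hp : ∀ x, p x = (n : ℝ)⁻¹ * (∑ i, f i x) + (r / 2) * ‖x‖ ^ 2) :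
    ∃ xstar : EuclideanSpace ℝ (Fin d), (∀ x, p xstar ≤ p x) ∧
      (⨅ x : Vec d n, ⨆ y : Vec d n, ⨆ z : {z : Vec d n // ∑ i, z i = 0},
          ((Q x y z.1 : ℝ) : EReal)) = (((n : ℝ) * p xstar : ℝ) : EReal) :=
  stmt0_general d n hn M f hlip rx ryz hrx hryz r hr F hF G hG Q hQ p hp
end
end

section
/- Let d,n ≥ 1, M ≥ 0, let each f_i : ℝ^d → ℝ be convex and M-Lipschitz, let r > 0 and r_x, r_yz > 0 with r_x + 1/r_yz = r. Let x* be the unique minimizer of p and set w* = (x*,…,x*) ∈ L. Then there exist y* ∈ (ℝ^d)^n and z* ∈ L⊥ such that: (i) F(x') ≥ F(w*) + ⟨y*, x' − w*⟩ for all x' ∈ (ℝ^d)^n (i.e. y* ∈ ∂F(w*)); (ii) w* + r_yz(y* + z*) = 0; (iii) r_yz(y* + z*) ∈ L; and (iv) ‖w*‖² ≤ nM²/r², ‖y*‖² ≤ (1 + r_x/r)² nM², and ‖z*‖² ≤ 4nM². -/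
open scoped BigOperators RealInnerProductSpace

noncomputable section

/-!
Minimality of `p` at `x*` says that `-r w*` is, up to a quadratic error, a subgradient at `w*`
of `Φ x = ∑ i, f i (x i)` restricted to the consensus subspace `L`. Hahn–Banach, applied to the
(sublinear) one-sided directional derivative of `Φ` at `w*`, extends it to a subgradient `g` of
`Φ` on all of `(ℝ^d)^n` with `g + r w* ∈ L⊥`. Then `y* = g + r_x w*` and `z* = -(g + r w*)`.
As `w*` is the orthogonal projection of `-g / r` onto `L`, `r ‖w*‖ ≤ ‖g‖ ≤ √n M`, and all three
norm bounds follow.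
-/

open Set Filter Topology

section RightLineDeriv

variable {E : Type*} [AddCommGroup E] [Module ℝ E] {f : E → ℝ}

/-- One-sided `lineDeriv`. For convex `f` the one-sided limit exists
(`ConvexOn.tendsto_rightLineDeriv`), so the junk value of `derivWithin` never occurs. -/
def rightLineDeriv (f : E → ℝ) (a v : E) : ℝ :=
  derivWithin (fun t : ℝ => f (a + t • v)) (Ioi 0) 0

theorem ConvexOn.comp_line (hf : ConvexOn ℝ univ f) (a v : E) :
    ConvexOn ℝ univ fun t : ℝ => f (a + t • v) := by
  simpa [Function.comp_def, AffineMap.lineMap_apply, add_comm] using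
    hf.comp_affineMap (AffineMap.lineMap a (a + v))

theorem ConvexOn.tendsto_rightLineDeriv (hf : ConvexOn ℝ univ f) (a v : E) :
    Tendsto (fun t => (f (a + t • v) - f a) / t) (𝓝[>] 0) (𝓝 (rightLineDeriv f a v)) := by
  have := (hasDerivWithinAt_iff_tendsto_slope' self_notMem_Ioi).mp
    ((hf.comp_line a v).hasDerivWithinAt_rightDeriv_of_mem_interior (x := 0) (by simp))
  unfold rightLineDeriv
  convert this using 1
  ext t
  simp [slope_def_field]

theorem ConvexOn.rightLineDeriv_le_sub (hf : ConvexOn ℝ univ f) (a v : E) :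
    rightLineDeriv f a v ≤ f (a + v) - f a := by
  unfold rightLineDeriv
  simpa [slope_def_field] using
    (hf.comp_line a v).rightDeriv_le_slope_of_mem_interior (x := 0) (y := 1) (by simp) trivial
      one_pos

theorem ConvexOn.rightLineDeriv_smul (hf : ConvexOn ℝ univ f) (a v : E) {c : ℝ} (hc : 0 < c) :
    rightLineDeriv f a (c • v) = c * rightLineDeriv f a v := by
  have hcmul : Tendsto (fun t : ℝ => c * t) (𝓝[>] 0) (𝓝[>] 0) :=
    tendsto_comap.mono_left (comap_mulLeft_nhdsGT_zero hc).ge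
  refine tendsto_nhds_unique (hf.tendsto_rightLineDeriv a (c • v)) ?_
  refine (((hf.tendsto_rightLineDeriv a v).comp hcmul).const_mul c).congr'
    (eventually_nhdsWithin_of_forall fun t ht => ?_)
  simp only [Function.comp_apply, smul_smul, mul_comm t c]
  field_simp [hc.ne', (show (0 : ℝ) < t from ht).ne']

theorem ConvexOn.rightLineDeriv_add_le (hf : ConvexOn ℝ univ f) (a u v : E) :
    rightLineDeriv f a (u + v) ≤ rightLineDeriv f a u + rightLineDeriv f a v := by
  have h2 : Tendsto (fun t : ℝ => 2 * t) (𝓝[>] 0) (𝓝[>] 0) :=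
    tendsto_comap.mono_left (comap_mulLeft_nhdsGT_zero two_pos).ge
  refine le_of_tendsto_of_tendsto (hf.tendsto_rightLineDeriv a (u + v))
    (((hf.tendsto_rightLineDeriv a u).comp h2).add ((hf.tendsto_rightLineDeriv a v).comp h2))
    (eventually_nhdsWithin_of_forall fun t (ht : 0 < t) => ?_)
  have hmid : f (a + t • (u + v)) ≤ 1 / 2 * f (a + (2 * t) • u) + 1 / 2 * f (a + (2 * t) • v) := by
    have hpt : (1 / 2 : ℝ) • (a + (2 * t) • u) + (1 / 2 : ℝ) • (a + (2 * t) • v)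
        = a + t • (u + v) := by
      module
    simpa only [hpt, smul_eq_mul] using hf.2 (mem_univ (a + (2 * t) • u))
      (mem_univ (a + (2 * t) • v)) (by norm_num : (0 : ℝ) ≤ 1 / 2) (by norm_num : (0 : ℝ) ≤ 1 / 2)
      (by norm_num)
  simp only [Function.comp_apply]
  rw [← add_div, div_le_div_iff₀ ht (by positivity)]
  nlinarith

end RightLineDeriv

section Subgradient

variable {E : Type*} [NormedAddCommGroup E] [InnerProductSpace ℝ E] {f : E → ℝ}

def HasSubgradientAt (f : E → ℝ) (g a : E) : Prop :=
  ∀ x, f a + ⟪g, x - a⟫ ≤ f x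

theorem HasSubgradientAt.norm_le {a g : E} {M : ℝ} (hg : HasSubgradientAt f g a) (hM : 0 ≤ M)
    (hlip : ∀ x y, |f x - f y| ≤ M * ‖x - y‖) : ‖g‖ ≤ M := by
  have h1 := hg (a + g)
  have h2 := le_of_abs_le (hlip (a + g) a)
  rw [add_sub_cancel_left, real_inner_self_eq_norm_sq] at h1
  rw [add_sub_cancel_left] at h2
  nlinarith [norm_nonneg g]

theorem HasSubgradientAt.add_half_sq_norm {a g : E} (hg : HasSubgradientAt f g a) {c : ℝ}
    (hc : 0 ≤ c) : HasSubgradientAt (fun x => f x + c / 2 * ‖x‖ ^ 2) (g + c • a) a := by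
  intro x
  have hsq := norm_add_sq_real a (x - a)
  rw [add_sub_cancel] at hsq
  rw [inner_add_left, real_inner_smul_left]
  nlinarith [hg x, mul_nonneg hc (sq_nonneg ‖x - a‖)]

theorem ConvexOn.inner_le_rightLineDeriv (hf : ConvexOn ℝ univ f) {a c v : E} {K : ℝ}
    (hc : ∀ t > 0, f a + t * ⟪c, v⟫ ≤ f (a + t • v) + K * t ^ 2) :
    ⟪c, v⟫ ≤ rightLineDeriv f a v := by
  have hlim : Tendsto (fun t => (f (a + t • v) - f a) / t + K * t) (𝓝[>] 0)
      (𝓝 (rightLineDeriv f a v)) := by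
    simpa using (hf.tendsto_rightLineDeriv a v).add
      (((continuous_const_mul K).tendsto' 0 0 (mul_zero K)).mono_left nhdsWithin_le_nhds)
  refine ge_of_tendsto hlim (eventually_nhdsWithin_of_forall fun t (ht : 0 < t) => ?_)
  rw [← sub_le_iff_le_add, le_div_iff₀ ht]
  nlinarith [hc t ht]

/-- Hahn–Banach form of the sum rule `∂(f + ι_{a+S}) a ⊆ ∂f a + Sᗮ`, for a `c` that is a
subgradient along `a + S` only up to a quadratic error. -/
theorem ConvexOn.exists_hasSubgradientAt_sub_mem_orthogonal [FiniteDimensional ℝ E]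
    (hf : ConvexOn ℝ univ f) (S : Submodule ℝ E) {a c : E} (K : ℝ)
    (hc : ∀ v ∈ S, f a + ⟪c, v⟫ ≤ f (a + v) + K * ‖v‖ ^ 2) :
    ∃ g : E, HasSubgradientAt f g a ∧ g - c ∈ Sᗮ := by
  have hcS : ∀ v : S, ⟪c, v⟫ ≤ rightLineDeriv f a v := fun v =>
    hf.inner_le_rightLineDeriv (K := K * ‖(v : E)‖ ^ 2) fun t _ => by
      simpa [real_inner_smul_right, norm_smul, mul_pow, mul_comm, mul_left_comm]
        using hc (t • v) (S.smul_mem t v.2)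
  obtain ⟨φ, hφS, hφ⟩ := exists_extension_of_le_sublinear ⟨S, innerₛₗ ℝ c ∘ₗ S.subtype⟩
    (rightLineDeriv f a) (fun _ hc v => hf.rightLineDeriv_smul a v hc)
    (hf.rightLineDeriv_add_le a) hcS
  set g := (InnerProductSpace.toDual ℝ E).symm (LinearMap.toContinuousLinearMap φ)
  have hg : ∀ v, ⟪g, v⟫ = φ v := fun v => InnerProductSpace.toDual_symm_apply
  refine ⟨g, fun x => ?_, Submodule.sub_mem_orthogonal_of_inner_left fun v => (hg v).trans (hφS v)⟩
  have := (hφ (x - a)).trans (hf.rightLineDeriv_le_sub a (x - a))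
  rw [add_sub_cancel, ← hg] at this
  linarith

end Subgradient

theorem mul_norm_le_norm_of_mem_of_add_smul_mem_orthogonal {E : Type*} [NormedAddCommGroup E]
    [InnerProductSpace ℝ E] {S : Submodule ℝ E} {a g : E} {r : ℝ} (ha : a ∈ S)
    (h : g + r • a ∈ Sᗮ) : r * ‖a‖ ≤ ‖g‖ := by
  have h0 : ⟪g + r • a, a⟫ = 0 := (Submodule.mem_orthogonal' S _).1 h a ha
  rw [inner_add_left, real_inner_smul_left, real_inner_self_eq_norm_sq] at h0
  have hcs := neg_le_of_abs_le (abs_real_inner_le_norm g a)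
  rcases (norm_nonneg a).eq_or_lt with ha0 | ha0
  · rw [← ha0, mul_zero]
    exact norm_nonneg g
  · exact le_of_mul_le_mul_right (by nlinarith) ha0

theorem sq_norm_add_smul_le {E : Type*} [NormedAddCommGroup E] [NormedSpace ℝ E] {g w : E}
    {G c r : ℝ} (hg : ‖g‖ ≤ G) (hw : r * ‖w‖ ≤ G) (hc : 0 ≤ c) (hr : 0 < r) :
    ‖g + c • w‖ ^ 2 ≤ (1 + c / r) ^ 2 * G ^ 2 := by
  have hw' : ‖w‖ ≤ G / r := (le_div_iff₀' hr).2 hw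
  have hgw : ‖g + c • w‖ ≤ (1 + c / r) * G :=
    calc ‖g + c • w‖ ≤ ‖g‖ + c * ‖w‖ := by
          simpa [norm_smul_of_nonneg hc] using norm_add_le g (c • w)
      _ ≤ G + c * (G / r) := add_le_add hg (mul_le_mul_of_nonneg_left hw' hc)
      _ = (1 + c / r) * G := by ring
  rw [← mul_pow]
  exact pow_le_pow_left₀ (norm_nonneg _) hgw 2

namespace PiLp

variable {ι : Type*}

section Diag

variable (ι) (F : Type*) [NormedAddCommGroup F] [InnerProductSpace ℝ F]

def diag : F →ₗ[ℝ] PiLp 2 (fun _ : ι => F) where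
  toFun x := WithLp.toLp 2 fun _ => x
  map_add' _ _ := rfl
  map_smul' _ _ := rfl

variable {ι F}

@[simp]
theorem diag_apply (x : F) (i : ι) : diag ι F x i = x := rfl

end Diag

variable [Fintype ι]

section Separable

variable {β : ι → Type*} [∀ i, NormedAddCommGroup (β i)] {f : ∀ i, β i → ℝ}

theorem sum_norm_le_sqrt_card_mul_norm (x : PiLp 2 β) :
    ∑ i, ‖x i‖ ≤ √(Fintype.card ι) * ‖x‖ := by
  rw [norm_eq_of_L2, ← Real.sqrt_mul (Nat.cast_nonneg _)]
  exact Real.le_sqrt_of_sq_le sq_sum_le_card_mul_sum_sq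

theorem convexOn_sum_apply [∀ i, NormedSpace ℝ (β i)] (hf : ∀ i, ConvexOn ℝ univ (f i)) :
    ConvexOn ℝ univ fun x : PiLp 2 β => ∑ i, f i (x i) := by
  refine ⟨convex_univ, fun x _ y _ a b ha hb hab => ?_⟩
  simp only [smul_eq_mul, Finset.mul_sum, ← Finset.sum_add_distrib]
  exact Finset.sum_le_sum fun i _ => (hf i).2 trivial trivial ha hb hab

theorem abs_sum_apply_sub_le {M : ℝ} (hf : ∀ i x y, |f i x - f i y| ≤ M * ‖x - y‖) (hM : 0 ≤ M)
    (x y : PiLp 2 β) :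
    |∑ i, f i (x i) - ∑ i, f i (y i)| ≤ √(Fintype.card ι) * M * ‖x - y‖ := by
  rw [← Finset.sum_sub_distrib]
  calc |∑ i, (f i (x i) - f i (y i))| ≤ ∑ i, M * ‖(x - y) i‖ :=
        (Finset.abs_sum_le_sum_abs _ _).trans (Finset.sum_le_sum fun i _ => hf i _ _)
    _ ≤ √(Fintype.card ι) * M * ‖x - y‖ := by
        rw [← Finset.mul_sum]
        nlinarith [sum_norm_le_sqrt_card_mul_norm (x - y)]

end Separable

variable {F : Type*} [NormedAddCommGroup F] [InnerProductSpace ℝ F]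

theorem inner_diag_diag (x y : F) : ⟪diag ι F x, diag ι F y⟫ = Fintype.card ι * ⟪x, y⟫ := by
  simp [PiLp.inner_apply]

theorem norm_sq_diag (x : F) : ‖diag ι F x‖ ^ 2 = Fintype.card ι * ‖x‖ ^ 2 := by
  rw [← real_inner_self_eq_norm_sq, inner_diag_diag, real_inner_self_eq_norm_sq]

theorem mem_orthogonal_range_diag_iff (z : PiLp 2 (fun _ : ι => F)) :
    z ∈ (LinearMap.range (diag ι F))ᗮ ↔ ∑ i, z i = 0 := by
  have h : ∀ y, ⟪z, diag ι F y⟫ = ⟪∑ i, z i, y⟫ := by simp [PiLp.inner_apply, sum_inner]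
  simp only [Submodule.mem_orthogonal', LinearMap.mem_range, forall_exists_index,
    forall_apply_eq_imp_iff, h]
  exact ⟨fun h0 => inner_self_eq_zero.1 (h0 _), fun h0 y => by rw [h0, inner_zero_left]⟩

theorem exists_hasSubgradientAt_add_smul_mem_orthogonal [Nonempty ι] [FiniteDimensional ℝ F]
    {f : ι → F → ℝ} (hf : ∀ i, ConvexOn ℝ univ (f i)) {r : ℝ} {x₀ : F}
    (hmin : ∀ x, (Fintype.card ι : ℝ)⁻¹ * ∑ i, f i x₀ + r / 2 * ‖x₀‖ ^ 2
      ≤ (Fintype.card ι : ℝ)⁻¹ * ∑ i, f i x + r / 2 * ‖x‖ ^ 2) :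
    ∃ g, HasSubgradientAt (fun x : PiLp 2 (fun _ : ι => F) => ∑ i, f i (x i)) g (diag ι F x₀) ∧
      g + r • diag ι F x₀ ∈ (LinearMap.range (diag ι F))ᗮ := by
  have hcard : (Fintype.card ι : ℝ) ≠ 0 := Nat.cast_ne_zero.2 Fintype.card_ne_zero
  have hopt : ∀ v ∈ LinearMap.range (diag ι F), ∑ i, f i (diag ι F x₀ i) + ⟪-r • diag ι F x₀, v⟫
      ≤ ∑ i, f i ((diag ι F x₀ + v) i) + r / 2 * ‖v‖ ^ 2 := by
    rintro _ ⟨u, rfl⟩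
    have hu := hmin (x₀ + u)
    rw [norm_add_sq_real] at hu
    rw [← map_add, real_inner_smul_left, inner_diag_diag, norm_sq_diag]
    simp only [diag_apply]
    linear_combination (Fintype.card ι : ℝ) * hu
      + (∑ i, f i (x₀ + u) - ∑ i, f i x₀) * mul_inv_cancel₀ hcard
  obtain ⟨g, hg, hgL⟩ := (convexOn_sum_apply hf).exists_hasSubgradientAt_sub_mem_orthogonal _ _ hopt
  rw [neg_smul, sub_neg_eq_add] at hgL
  exact ⟨g, hg, hgL⟩

end PiLp

theorem stmt1_general (d n : ℕ) (hn : 1 ≤ n) (M : ℝ) (hM : 0 ≤ M)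
    (f : Fin n → EuclideanSpace ℝ (Fin d) → ℝ)
    (hconv : ∀ i, ConvexOn ℝ Set.univ (f i))
    (hlip : ∀ i x x', |f i x - f i x'| ≤ M * ‖x - x'‖)
    (r rx ryz : ℝ) (hr : 0 < r) (hrx : 0 < rx) (hryz : 0 < ryz)
    (hsum : rx + 1 / ryz = r)
    (p : EuclideanSpace ℝ (Fin d) → ℝ)
    (hp : ∀ x, p x = (n : ℝ)⁻¹ * (∑ i, f i x) + (r / 2) * ‖x‖ ^ 2)
    (F : Vec d n → ℝ) (hF : ∀ x, F x = (∑ i, f i (x i)) + (rx / 2) * ‖x‖ ^ 2)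
    (xstar : EuclideanSpace ℝ (Fin d))
    (hmin : ∀ x, p xstar ≤ p x)
    (wstar : Vec d n)
    (hw : wstar = (WithLp.equiv 2 (∀ _ : Fin n, EuclideanSpace ℝ (Fin d))).symm
      fun _ => xstar) :
    ∃ ystar zstar : Vec d n,
      (∑ i, zstar i) = 0 ∧
      (∀ x', F x' ≥ F wstar + ⟪ystar, x' - wstar⟫) ∧
      wstar + ryz • (ystar + zstar) = 0 ∧
      (∀ i j, (ryz • (ystar + zstar)) i = (ryz • (ystar + zstar)) j) ∧
      ‖wstar‖ ^ 2 ≤ n * M ^ 2 / r ^ 2 ∧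
      ‖ystar‖ ^ 2 ≤ (1 + rx / r) ^ 2 * (n * M ^ 2) ∧
      ‖zstar‖ ^ 2 ≤ 4 * n * M ^ 2 := by
  have hwL : wstar = PiLp.diag _ _ xstar := hw
  have : Nonempty (Fin n) := Fin.pos_iff_nonempty.mp hn
  obtain ⟨g, hg, hgL⟩ := PiLp.exists_hasSubgradientAt_add_smul_mem_orthogonal hconv (r := r)
    (x₀ := xstar) fun x => by simpa only [hp, Fintype.card_fin] using hmin x
  rw [← hwL] at hg hgL
  set G := √n * M
  have hG : G ^ 2 = n * M ^ 2 := by rw [mul_pow, Real.sq_sqrt (Nat.cast_nonneg n)]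
  have hgG : ‖g‖ ≤ G :=
    hg.norm_le (by positivity) (by simpa using PiLp.abs_sum_apply_sub_le hlip hM)
  have hwG : r * ‖wstar‖ ≤ G :=
    (mul_norm_le_norm_of_mem_of_add_smul_mem_orthogonal (hwL ▸ LinearMap.mem_range_self _ _)
      hgL).trans hgG
  have hstat : wstar + ryz • ((g + rx • wstar) + -(g + r • wstar)) = 0 := by
    have hryz' : ryz * (rx - r) = -1 := by field_simp at hsum ⊢; linarith
    rw [show (g + rx • wstar) + -(g + r • wstar) = (rx - r) • wstar by module, smul_smul, hryz',
      neg_one_smul, add_neg_cancel]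
  refine ⟨g + rx • wstar, -(g + r • wstar), (PiLp.mem_orthogonal_range_diag_iff _).1 (neg_mem hgL),
    fun x' => ?_, hstat, fun i j => ?_, ?_, ?_, ?_⟩
  · simpa only [hF] using hg.add_half_sq_norm hrx.le x'
  · rw [eq_neg_of_add_eq_zero_right hstat, hwL]
    rfl
  · rw [← hG, ← div_pow]
    exact pow_le_pow_left₀ (norm_nonneg _) ((le_div_iff₀' hr).2 hwG) 2
  · rw [← hG]
    exact sq_norm_add_smul_le hgG hwG hrx.le hr
  · rw [norm_neg, show (4 : ℝ) * n * M ^ 2 = (1 + r / r) ^ 2 * G ^ 2 by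
      rw [hG, div_self hr.ne']; ring]
    exact sq_norm_add_smul_le hgG hwG hr.le hr

theorem stmt1 (d n : ℕ) (hd : 1 ≤ d) (hn : 1 ≤ n) (M : ℝ) (hM : 0 ≤ M)
    (f : Fin n → EuclideanSpace ℝ (Fin d) → ℝ)
    (hconv : ∀ i, ConvexOn ℝ Set.univ (f i))
    (hlip : ∀ i x x', |f i x - f i x'| ≤ M * ‖x - x'‖)
    (r rx ryz : ℝ) (hr : 0 < r) (hrx : 0 < rx) (hryz : 0 < ryz)
    (hsum : rx + 1 / ryz = r)
    (p : EuclideanSpace ℝ (Fin d) → ℝ)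
    (hp : ∀ x, p x = (n : ℝ)⁻¹ * (∑ i, f i x) + (r / 2) * ‖x‖ ^ 2)
    (F : Vec d n → ℝ) (hF : ∀ x, F x = (∑ i, f i (x i)) + (rx / 2) * ‖x‖ ^ 2)
    (xstar : EuclideanSpace ℝ (Fin d))
    (hmin : ∀ x, p xstar ≤ p x)
    (huniq : ∀ x, (∀ x', p x ≤ p x') → x = xstar)
    (wstar : Vec d n)
    (hw : wstar = (WithLp.equiv 2 (∀ _ : Fin n, EuclideanSpace ℝ (Fin d))).symm
      fun _ => xstar) :
    ∃ ystar zstar : Vec d n,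
      (∑ i, zstar i) = 0 ∧
      (∀ x', F x' ≥ F wstar + ⟪ystar, x' - wstar⟫) ∧
      wstar + ryz • (ystar + zstar) = 0 ∧
      (∀ i j, (ryz • (ystar + zstar)) i = (ryz • (ystar + zstar)) j) ∧
      ‖wstar‖ ^ 2 ≤ n * M ^ 2 / r ^ 2 ∧
      ‖ystar‖ ^ 2 ≤ (1 + rx / r) ^ 2 * (n * M ^ 2) ∧
      ‖zstar‖ ^ 2 ≤ 4 * n * M ^ 2 :=
  stmt1_general d n hn M hM f hconv hlip r rx ryz hr hrx hryz hsum p hp F hF xstar hmin wstar hw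

end
end

section
/- Let d ≥ 2 and a, r > 0, and define p : ℝ^d → ℝ by p(x) = (a/3)∑_{j=1}^{d−1} h_j(x) − (a/3)⟨e_1, x⟩ + (r/2)‖x‖². Then p has the unique minimizer x* = (a/(3rd))·1_d (the vector with all coordinates equal to a/(3rd)), p(x*) = −a²/(18rd), and every x ∈ ℝ^d with ⟨e_d, x⟩ = 0 satisfies p(x) ≥ 0; consequently p(x) − p(x*) ≥ a²/(18rd) for every x with ⟨e_d, x⟩ = 0. -/
open scoped BigOperators RealInnerProductSpace

noncomputable section

/-- The `k`-th standard basis vector of `ℝ^d`, `0`-indexed (so the paper's `e_k` is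
`stdBasis d (k-1)`); out-of-range indices give `0`. -/
def stdBasis (d j : ℕ) : EuclideanSpace ℝ (Fin d) :=
  if h : j < d then EuclideanSpace.single ⟨j, h⟩ 1 else 0

/-!
Write `S x = ∑ⱼ |x_{j+1} - x_j|`. Telescoping gives `x₁ - x_i ≤ S x` for every `i`, and
averaging over `i` gives `x₁ - S x ≤ (1/d) ∑ᵢ xᵢ`. Hence
`p x ≥ (r/2)‖x‖² - (a/(3d)) ∑ᵢ xᵢ = (r/2)‖x - x*‖² - (r/2)‖x*‖²`, with equality at `x*`,
where `S` vanishes. On the hyperplane `x_d = 0` telescoping gives `x₁ ≤ S x`, so `p x ≥ 0`.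
-/

lemma sub_le_sum_Icc_abs_sub (X : ℕ → ℝ) {k n : ℕ} (hk : k ≤ n) :
    X 0 - X k ≤ ∑ j ∈ Finset.Icc 1 n, |X j - X (j - 1)| := by
  have telescope : ∀ m, X 0 - X m ≤ ∑ j ∈ Finset.Icc 1 m, |X j - X (j - 1)| := by
    intro m
    induction m with
    | zero => simp
    | succ m ih =>
      rw [Finset.sum_Icc_succ_top (by omega), Nat.add_sub_cancel, abs_sub_comm]
      linarith [le_abs_self (X m - X (m + 1))]
  exact (telescope k).trans <| Finset.sum_le_sum_of_subset_of_nonneg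
    (Finset.Icc_subset_Icc_right hk) fun _ _ _ => abs_nonneg _

lemma inner_stdBasis_of_lt {d j : ℕ} (hj : j < d) (x : EuclideanSpace ℝ (Fin d)) :
    ⟪stdBasis d j, x⟫ = x ⟨j, hj⟩ := by
  simp [stdBasis, hj, EuclideanSpace.inner_single_left]

lemma norm_sq_eq_of_forall_eq {d : ℕ} {c : EuclideanSpace ℝ (Fin d)} {t : ℝ}
    (hc : ∀ i, c i = t) : ‖c‖ ^ 2 = d * t ^ 2 := by
  simp [EuclideanSpace.norm_sq_eq, hc]

def chainObjective (d : ℕ) (a r : ℝ) (x : EuclideanSpace ℝ (Fin d)) : ℝ :=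
  (a / 3) * ∑ j ∈ Finset.Icc 1 (d - 1), |⟪stdBasis d j - stdBasis d (j - 1), x⟫|
    - (a / 3) * ⟪stdBasis d 0, x⟫ + (r / 2) * ‖x‖ ^ 2

section chainObjective

variable {d : ℕ} {a r : ℝ}

lemma inner_stdBasis_zero_sub_le_sum_abs (x : EuclideanSpace ℝ (Fin d)) (i : Fin d) :
    ⟪stdBasis d 0, x⟫ - x i
      ≤ ∑ j ∈ Finset.Icc 1 (d - 1), |⟪stdBasis d j - stdBasis d (j - 1), x⟫| := by
  simpa only [inner_sub_left, inner_stdBasis_of_lt i.isLt] using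
    sub_le_sum_Icc_abs_sub (fun j => ⟪stdBasis d j, x⟫) (by omega : (i : ℕ) ≤ d - 1)

lemma card_mul_inner_stdBasis_zero_sub_le (x : EuclideanSpace ℝ (Fin d)) :
    d * (⟪stdBasis d 0, x⟫
      - ∑ j ∈ Finset.Icc 1 (d - 1), |⟪stdBasis d j - stdBasis d (j - 1), x⟫|) ≤ ∑ i, x i := by
  have h := Finset.sum_le_sum fun i (_ : i ∈ Finset.univ) =>
    inner_stdBasis_zero_sub_le_sum_abs x i
  simp only [Finset.sum_sub_distrib, Finset.sum_const, Finset.card_univ, Fintype.card_fin,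
    nsmul_eq_mul] at h
  linarith

lemma chainObjective_const (hd : d ≠ 0) {c : EuclideanSpace ℝ (Fin d)} {t : ℝ}
    (hc : ∀ i, c i = t) :
    chainObjective d a r c = -(a / 3) * t + (r / 2) * (d * t ^ 2) := by
  have hsum : ∑ j ∈ Finset.Icc 1 (d - 1), |⟪stdBasis d j - stdBasis d (j - 1), c⟫| = 0 :=
    Finset.sum_eq_zero fun j hj => by
      obtain ⟨hj1, hjd⟩ := Finset.mem_Icc.mp hj
      rw [inner_sub_left, inner_stdBasis_of_lt (by omega), inner_stdBasis_of_lt (by omega),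
        hc, hc, sub_self, abs_zero]
  rw [chainObjective, hsum, inner_stdBasis_of_lt (Nat.pos_of_ne_zero hd), hc,
    norm_sq_eq_of_forall_eq hc]
  ring

lemma chainObjective_add_le (hd : d ≠ 0) (ha : 0 ≤ a) (hr : r ≠ 0)
    {c : EuclideanSpace ℝ (Fin d)} (hc : ∀ i, c i = a / (3 * r * d))
    (x : EuclideanSpace ℝ (Fin d)) :
    chainObjective d a r c + (r / 2) * ‖x - c‖ ^ 2 ≤ chainObjective d a r x := by
  have havg := card_mul_inner_stdBasis_zero_sub_le x
  have hinner : ⟪x, c⟫ = a / (3 * r * d) * ∑ i, x i := by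
    rw [Finset.mul_sum]
    simp [PiLp.inner_apply, hc]
  have hcc := norm_sq_eq_of_forall_eq hc
  set S := ∑ j ∈ Finset.Icc 1 (d - 1), |⟪stdBasis d j - stdBasis d (j - 1), x⟫|
  have key : chainObjective d a r x - (chainObjective d a r c + (r / 2) * ‖x - c‖ ^ 2)
      = a / (3 * d) * (∑ i, x i - d * (⟪stdBasis d 0, x⟫ - S)) := by
    rw [chainObjective_const hd hc, norm_sub_sq_real, hinner, hcc, chainObjective]
    field_simp
    ring
  rw [← sub_nonneg, key]
  exact mul_nonneg (by positivity) (by linarith)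

lemma chainObjective_nonneg (ha : 0 ≤ a) (hr : 0 ≤ r) {x : EuclideanSpace ℝ (Fin d)}
    (hx : ⟪stdBasis d (d - 1), x⟫ = 0) : 0 ≤ chainObjective d a r x := by
  have h := sub_le_sum_Icc_abs_sub (fun j => ⟪stdBasis d j, x⟫) le_rfl (n := d - 1)
  simp only [hx, sub_zero, ← inner_sub_left] at h
  rw [chainObjective]
  linarith [mul_le_mul_of_nonneg_left h (by positivity : 0 ≤ a / 3),
    mul_nonneg (by positivity : 0 ≤ r / 2) (sq_nonneg ‖x‖)]

end chainObjective

theorem stmt2 (d : ℕ) (hd : 2 ≤ d) (a r : ℝ) (ha : 0 < a) (hr : 0 < r)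
    (p : EuclideanSpace ℝ (Fin d) → ℝ)
    (hp : ∀ x, p x =
      (a / 3) * ∑ j ∈ Finset.Icc 1 (d - 1), |⟪stdBasis d j - stdBasis d (j - 1), x⟫|
        - (a / 3) * ⟪stdBasis d 0, x⟫ + (r / 2) * ‖x‖ ^ 2)
    (xstar : EuclideanSpace ℝ (Fin d))
    (hxstar : xstar = (WithLp.equiv 2 (Fin d → ℝ)).symm fun _ => a / (3 * r * d)) :
    (∀ x, p xstar ≤ p x) ∧
    (∀ x, p x = p xstar → x = xstar) ∧
    p xstar = -(a ^ 2 / (18 * r * d)) ∧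
    (∀ x, ⟪stdBasis d (d - 1), x⟫ = 0 → 0 ≤ p x) ∧
    (∀ x, ⟪stdBasis d (d - 1), x⟫ = 0 → a ^ 2 / (18 * r * d) ≤ p x - p xstar) := by
  obtain rfl : p = chainObjective d a r := funext hp
  have hd0 : d ≠ 0 := by omega
  have hc : ∀ i, xstar i = a / (3 * r * d) := fun i => by rw [hxstar]; rfl
  have growth := chainObjective_add_le hd0 ha.le hr.ne' hc
  have value : chainObjective d a r xstar = -(a ^ 2 / (18 * r * d)) := by
    rw [chainObjective_const hd0 hc]
    field_simp
    ring
  have nonneg x (hx : ⟪stdBasis d (d - 1), x⟫ = 0) := chainObjective_nonneg ha.le hr.le hx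
  refine ⟨fun x => ?_, fun x hx => ?_, value, nonneg, fun x hx => ?_⟩
  · nlinarith [growth x, sq_nonneg ‖x - xstar‖]
  · have hsq : ‖x - xstar‖ ^ 2 = 0 := le_antisymm (by nlinarith [growth x]) (sq_nonneg _)
    exact sub_eq_zero.mp (norm_eq_zero.mp (pow_eq_zero_iff two_ne_zero |>.mp hsq))
  · linarith [nonneg x hx]

end
end

section
/- Let n ≥ 3 and c ∈ {1,…,n}. Define W ∈ ℝ^{n×n} by W_{ij} = (1/n)·deg_i if i = j, W_{ij} = −1/n if i ≠ j and (i = c or j = c), and W_{ij} = 0 otherwise, where deg_c = n − 1 and deg_i = 1 for i ≠ c (the scaled Laplacian of the star graph with center c). Then W is symmetric, W·1_n = 0 and Wᵀ·1_n = 0, and for every x ∈ ℝ^n with ∑_{i=1}^n x_i = 0 one has ‖Wx − x‖² ≤ (1 − 1/n)‖x‖². -/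
/-!
For `∑ x = 0` the scaled star Laplacian `W` fixes the central coordinate, `(W x)_c = x_c`, while
`(W x - x)_i = -((n - 1) x_i + x_c) / n` for `i ≠ c`. Since `∑_{i ≠ c} x_i = -x_c`, expanding gives
`∑_{i ≠ c} ((n - 1) x_i + x_c)² = (n - 1)² ∑_{i ≠ c} x_i² - (n - 1) x_c²`, hence
`‖W x - x‖² ≤ ((n - 1) / n)² ‖x‖² ≤ (1 - 1 / n) ‖x‖²`.
-/

open Matrix Finset

noncomputable section

theorem sum_sq_card_mul_add_le {ι : Type*} (s : Finset ι) (x : ι → ℝ) (t : ℝ)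
    (hs : ∑ i ∈ s, x i = -t) :
    ∑ i ∈ s, ((#s : ℝ) * x i + t) ^ 2 ≤ (#s : ℝ) ^ 2 * ∑ i ∈ s, x i ^ 2 := by
  have hexpand : ∑ i ∈ s, ((#s : ℝ) * x i + t) ^ 2
      = (#s : ℝ) ^ 2 * ∑ i ∈ s, x i ^ 2 + 2 * #s * t * ∑ i ∈ s, x i + #s * t ^ 2 := by
    simp only [add_sq, sum_add_distrib, sum_const, nsmul_eq_mul, mul_pow, ← sum_mul, ← mul_sum]
    ring
  rw [hexpand, hs]
  nlinarith [sq_nonneg t, (#s).cast_nonneg (α := ℝ)]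

section StarLaplacian

variable {ι : Type*} [Fintype ι] [DecidableEq ι]

def scaledStarLaplacian (c : ι) : Matrix ι ι ℝ :=
  Matrix.of fun i j =>
    if i = j then (if i = c then ((Fintype.card ι : ℝ) - 1) / Fintype.card ι
      else 1 / Fintype.card ι)
    else if i = c ∨ j = c then -(1 / Fintype.card ι) else 0

variable (c : ι)

theorem scaledStarLaplacian_isSymm : (scaledStarLaplacian c).IsSymm := by
  ext i j
  by_cases h : i = j
  · simp [scaledStarLaplacian, h]
  · simp [scaledStarLaplacian, h, Ne.symm h, or_comm]

theorem scaledStarLaplacian_mulVec_center (x : ι → ℝ) :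
    (scaledStarLaplacian c *ᵥ x) c = x c - (∑ i, x i) / Fintype.card ι := by
  have hN : (Fintype.card ι : ℝ) ≠ 0 := Nat.cast_ne_zero.2 (Fintype.card_pos_iff.2 ⟨c⟩).ne'
  have hterm : ∀ j, scaledStarLaplacian c c j * x j
      = (if c = j then x j else 0) - x j / Fintype.card ι := by
    intro j
    by_cases h : c = j
    · subst h; simp [scaledStarLaplacian]; field_simp
    · simp [scaledStarLaplacian, h]; ring
  simp only [mulVec, dotProduct, hterm, sum_sub_distrib, sum_ite_eq, mem_univ, if_true, sum_div]

theorem scaledStarLaplacian_mulVec_of_ne (x : ι → ℝ) {i : ι} (hi : i ≠ c) :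
    (scaledStarLaplacian c *ᵥ x) i = (x i - x c) / Fintype.card ι := by
  have hterm : ∀ j, scaledStarLaplacian c i j * x j
      = (if i = j then x j / Fintype.card ι else 0) - (if c = j then x j / Fintype.card ι else 0) := by
    intro j
    by_cases hij : i = j
    · subst hij; simp [scaledStarLaplacian, hi, Ne.symm hi]; ring
    · by_cases hcj : c = j
      · subst hcj; simp [scaledStarLaplacian, hij]; ring
      · simp [scaledStarLaplacian, hij, hcj, hi, Ne.symm hcj]
  simp only [mulVec, dotProduct, hterm, sum_sub_distrib, sum_ite_eq, mem_univ, if_true, sub_div]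

theorem scaledStarLaplacian_mulVec_one : scaledStarLaplacian c *ᵥ (fun _ => 1) = 0 := by
  have hN : (Fintype.card ι : ℝ) ≠ 0 := Nat.cast_ne_zero.2 (Fintype.card_pos_iff.2 ⟨c⟩).ne'
  funext i
  by_cases hi : i = c
  · subst hi; simp [scaledStarLaplacian_mulVec_center, hN]
  · simp [scaledStarLaplacian_mulVec_of_ne c _ hi]

theorem scaledStarLaplacian_sum_sq_mulVec_sub_le (x : ι → ℝ) (hx : ∑ i, x i = 0) :
    ∑ i, ((scaledStarLaplacian c *ᵥ x) i - x i) ^ 2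
      ≤ (1 - 1 / Fintype.card ι) * ∑ i, x i ^ 2 := by
  set N : ℝ := (Fintype.card ι : ℝ)
  set s := univ.erase c
  have hN : 0 < N := Nat.cast_pos.2 (Fintype.card_pos_iff.2 ⟨c⟩)
  have hcard : (#s : ℝ) = N - 1 := by
    rw [cast_card_erase_of_mem (mem_univ c), card_univ]
  have hs : ∑ i ∈ s, x i = -x c := by
    linarith [add_sum_erase univ x (mem_univ c)]
  have hterm : ∀ i ∈ s, ((scaledStarLaplacian c *ᵥ x) i - x i) ^ 2
      = ((#s : ℝ) * x i + x c) ^ 2 / N ^ 2 := by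
    intro i hi
    rw [scaledStarLaplacian_mulVec_of_ne c x (ne_of_mem_erase hi), hcard]
    change ((x i - x c) / N - x i) ^ 2 = _
    field_simp
    ring
  have hsum_sq_nonneg : 0 ≤ ∑ i, x i ^ 2 := sum_nonneg fun i _ => sq_nonneg (x i)
  calc ∑ i, ((scaledStarLaplacian c *ᵥ x) i - x i) ^ 2
      = ∑ i ∈ s, ((scaledStarLaplacian c *ᵥ x) i - x i) ^ 2 := by
        rw [← add_sum_erase univ _ (mem_univ c), scaledStarLaplacian_mulVec_center, hx,
          zero_div, sub_zero, sub_self, zero_pow two_ne_zero, zero_add]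
    _ = (∑ i ∈ s, ((#s : ℝ) * x i + x c) ^ 2) / N ^ 2 := by
        rw [sum_congr rfl hterm, sum_div]
    _ ≤ (#s : ℝ) ^ 2 * (∑ i ∈ s, x i ^ 2) / N ^ 2 := by
        gcongr; exact sum_sq_card_mul_add_le s x (x c) hs
    _ ≤ (N - 1) ^ 2 * (∑ i, x i ^ 2) / N ^ 2 := by
        rw [hcard]
        gcongr
        exact subset_univ s
    _ ≤ (1 - 1 / N) * ∑ i, x i ^ 2 := by
        rw [div_le_iff₀ (by positivity)]
        have hscale : (1 - 1 / N) * N ^ 2 = (N - 1) * N := by field_simp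
        nlinarith [hsum_sq_nonneg, hscale]

end StarLaplacian

theorem stmt6_general (n : ℕ) (c : Fin n)
    (W : Matrix (Fin n) (Fin n) ℝ)
    (hW : ∀ i j, W i j =
      if i = j then (if i = c then ((n : ℝ) - 1) / n else 1 / n)
      else if i = c ∨ j = c then -(1 / n) else 0) :
    W.IsSymm ∧
    W.mulVec (fun _ => 1) = 0 ∧
    Wᵀ.mulVec (fun _ => 1) = 0 ∧
    ∀ x : EuclideanSpace ℝ (Fin n), (∑ i, x i) = 0 →
      ‖(WithLp.equiv 2 (Fin n → ℝ)).symm (W.mulVec ((WithLp.equiv 2 (Fin n → ℝ)) x)) - x‖ ^ 2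
        ≤ (1 - 1 / n) * ‖x‖ ^ 2 := by
  obtain rfl : W = scaledStarLaplacian c := by
    ext i j; simp [hW, scaledStarLaplacian]
  refine ⟨scaledStarLaplacian_isSymm c, scaledStarLaplacian_mulVec_one c, ?_, fun x hx => ?_⟩
  · rw [(scaledStarLaplacian_isSymm c).eq]
    exact scaledStarLaplacian_mulVec_one c
  · rw [EuclideanSpace.real_norm_sq_eq, EuclideanSpace.real_norm_sq_eq]
    simpa using scaledStarLaplacian_sum_sq_mulVec_sub_le c x.ofLp hx

theorem stmt6 (n : ℕ) (hn : 3 ≤ n) (c : Fin n)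
    (W : Matrix (Fin n) (Fin n) ℝ)
    (hW : ∀ i j, W i j =
      if i = j then (if i = c then ((n : ℝ) - 1) / n else 1 / n)
      else if i = c ∨ j = c then -(1 / n) else 0) :
    W.IsSymm ∧
    W.mulVec (fun _ => 1) = 0 ∧
    Wᵀ.mulVec (fun _ => 1) = 0 ∧
    ∀ x : EuclideanSpace ℝ (Fin n), (∑ i, x i) = 0 →
      ‖(WithLp.equiv 2 (Fin n → ℝ)).symm (W.mulVec ((WithLp.equiv 2 (Fin n → ℝ)) x)) - x‖ ^ 2
        ≤ (1 - 1 / n) * ‖x‖ ^ 2 :=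
  stmt6_general n c W hW

end
end

section
/- Let d, n ≥ 1, M ≥ 0, let each f_i : ℝ^d → ℝ be convex and M-Lipschitz, and let ∇̂f_i : ℝ^d → ℝ^d satisfy f_i(x') ≥ f_i(u) + ⟨∇̂f_i(u), x' − u⟩ for all u, x' ∈ ℝ^d. Let r_x ≥ 0, τ_x > 0, let T ≥ 1 be an integer, and set η_x = 1/(τ_x·T), β = r_x, σ = τ_x/(2τ_x + β). Fix x⁰, y ∈ (ℝ^d)^n, define x⁽⁰⁾ = x⁰ and, for t = 0,…,T−1, let x⁽ᵗ⁺¹⁾ be the unique solution of x⁽ᵗ⁺¹⁾ = x⁽ᵗ⁾ − η_x·(g(x⁽ᵗ⁾) + β·x⁽ᵗ⁺¹⁾ − y + τ_x·(x⁽ᵗ⁺¹⁾ − x⁰)), where g(u) = (∇̂f_1(u_1),…,∇̂f_n(u_n)). Set x̃ = (1/T)∑_{t=1}^T x⁽ᵗ⁾ and x⁺ = σ·x⁽ᵀ⁾ + (1−σ)·x̃. Then for every x ∈ (ℝ^d)^n: (τ_x + r_x/2)‖x⁺ − x‖² ≤ τ_x‖x⁰ − x‖² + 2nM²/(τ_x·T)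 − (F(x̃) − F(x) − ⟨y, x̃ − x⟩ + (τ_x/2)‖x̃ − x⁰‖²). -/
open scoped BigOperators RealInnerProductSpace

noncomputable section

/-- `g(u) = (∇̂f_1(u_1), …, ∇̂f_n(u_n))`. -/
def gvec {d n : ℕ}
    (gf : Fin n → EuclideanSpace ℝ (Fin d) → EuclideanSpace ℝ (Fin d))
    (u : Vec d n) : Vec d n :=
  (WithLp.equiv 2 (∀ _ : Fin n, EuclideanSpace ℝ (Fin d))).symm fun i => gf i (u i)

/-! The update is a forward–backward step with step size `1/(τT)`: explicit (a subgradient step)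
in the separable part `∑ fᵢ`, implicit in the quadratic `(r/2)‖z‖² - ⟪y, z⟫ + (τ/2)‖z - x⁰‖²`,
which is `(r + τ)`-strongly convex. Each step gives the three-point inequality for the sum `φ`
of the two parts, with an error `2nM²/(τT)` coming from `‖g‖² ≤ nM²` (Lipschitz functions have
bounded subgradients). Summing over the steps telescopes, Jensen's inequality (through the
subgradient at the average) passes to `x̃`, and convexity of `‖· - x‖²` with the weights `σ`,
`1 - σ` turns the remaining `(τ/2)‖x⁽ᵀ⁾ - x‖² + ((r + τ)/2)‖x̃ - x‖²` into the left-hand side. -/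

section InnerProduct

variable {E : Type*} [NormedAddCommGroup E] [InnerProductSpace ℝ E]

theorem real_inner_le_young {c : ℝ} (hc : 0 < c) (u v : E) :
    ⟪u, v⟫ ≤ c / 4 * ‖v‖ ^ 2 + ‖u‖ ^ 2 / c := by
  have hcs := real_inner_le_norm u v
  have hsq : 0 ≤ (c / 2 * ‖v‖ - ‖u‖) ^ 2 / c := by positivity
  have hexp : (c / 2 * ‖v‖ - ‖u‖) ^ 2 / c = c / 4 * ‖v‖ ^ 2 + ‖u‖ ^ 2 / c - ‖u‖ * ‖v‖ := by
    field_simp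
    ring
  linarith

theorem norm_sq_le_of_lipschitz_of_subgradient {f : E → ℝ} {M : ℝ}
    (hlip : ∀ x x', |f x - f x'| ≤ M * ‖x - x'‖) {u s : E}
    (hs : ∀ x', f x' ≥ f u + ⟪s, x' - u⟫) : ‖s‖ ^ 2 ≤ M ^ 2 := by
  have hsub := hs (u + s)
  rw [add_sub_cancel_left, real_inner_self_eq_norm_sq] at hsub
  have hlip' := (abs_le.mp (hlip (u + s) u)).2
  rw [add_sub_cancel_left] at hlip'
  have hle : ‖s‖ ≤ |M| := by
    rcases (norm_nonneg s).eq_or_lt with hs0 | hs0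
    · rw [← hs0]; exact abs_nonneg M
    · nlinarith [le_abs_self M]
  exact sq_le_sq' (by linarith [norm_nonneg s]) hle |>.trans_eq (sq_abs M)

theorem card_mul_le_sum_of_subgradient {ι : Type*} (s : Finset ι) (v : ι → E) {φ : E → ℝ}
    {w d : E} (hw : ∑ i ∈ s, v i = (s.card : ℝ) • w) (hφ : ∀ z, φ w + ⟪d, z - w⟫ ≤ φ z) :
    s.card * φ w ≤ ∑ i ∈ s, φ (v i) := by
  calc s.card * φ w = ∑ i ∈ s, (φ w + ⟪d, v i - w⟫) := by
        rw [Finset.sum_add_distrib, ← inner_sum, Finset.sum_sub_distrib, hw, Finset.sum_const,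
          Finset.sum_const, ← Nat.cast_smul_eq_nsmul ℝ, ← Nat.cast_smul_eq_nsmul ℝ, sub_self,
          inner_zero_right, add_zero, smul_eq_mul]
    _ ≤ ∑ i ∈ s, φ (v i) := Finset.sum_le_sum fun i _ => hφ (v i)

theorem norm_sub_sq_add_inner_le (x w z : E) :
    ‖w - x‖ ^ 2 + ⟪(2 : ℝ) • (w - x), z - w⟫ ≤ ‖z - x‖ ^ 2 := by
  have h := norm_add_sq_real (w - x) (z - w)
  rw [sub_add_sub_cancel'] at h
  rw [real_inner_smul_left]
  nlinarith [sq_nonneg ‖z - w‖]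

theorem norm_sub_sq_convex_comb_le {σ : ℝ} (hσ0 : 0 ≤ σ) (hσ1 : σ ≤ 1) (p q x : E) :
    ‖σ • p + (1 - σ) • q - x‖ ^ 2 ≤ σ * ‖p - x‖ ^ 2 + (1 - σ) * ‖q - x‖ ^ 2 := by
  have hconv : ConvexOn ℝ Set.univ fun z : E => ‖z‖ ^ 2 :=
    (convexOn_norm convex_univ).pow (fun z _ => norm_nonneg z) 2
  have h := hconv.2 (Set.mem_univ (p - x)) (Set.mem_univ (q - x)) hσ0 (sub_nonneg.2 hσ1)
    (add_sub_cancel σ 1)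
  simp only [smul_eq_mul] at h
  rwa [show σ • p + (1 - σ) • q - x = σ • (p - x) + (1 - σ) • (q - x) by module]

theorem add_mul_norm_sub_sq_le {a b σ : ℝ} (ha : 0 ≤ a) (hb : 0 ≤ b) (hab : 0 < a + b)
    (hσ : σ * (a + b) = a) (p q x : E) :
    (a + b) * ‖σ • p + (1 - σ) • q - x‖ ^ 2 ≤ a * ‖p - x‖ ^ 2 + b * ‖q - x‖ ^ 2 := by
  have hσ0 : 0 ≤ σ := nonneg_of_mul_nonneg_left (by rwa [hσ]) hab
  have hσ1 : σ ≤ 1 := le_of_mul_le_mul_right (by linarith) hab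
  calc (a + b) * ‖σ • p + (1 - σ) • q - x‖ ^ 2
      ≤ (a + b) * (σ * ‖p - x‖ ^ 2 + (1 - σ) * ‖q - x‖ ^ 2) :=
        mul_le_mul_of_nonneg_left (norm_sub_sq_convex_comb_le hσ0 hσ1 p q x) hab.le
    _ = a * ‖p - x‖ ^ 2 + b * ‖q - x‖ ^ 2 := by linear_combination (‖p - x‖ ^ 2 - ‖q - x‖ ^ 2) * hσ

theorem quadratic_sub_eq (r τ : ℝ) (y x0 w z : E) :
    (r / 2 * ‖z‖ ^ 2 - ⟪y, z⟫ + τ / 2 * ‖z - x0‖ ^ 2)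
      - (r / 2 * ‖w‖ ^ 2 - ⟪y, w⟫ + τ / 2 * ‖w - x0‖ ^ 2)
    = ⟪r • w - y + τ • (w - x0), z - w⟫ + (r + τ) / 2 * ‖z - w‖ ^ 2 := by
  have hz := norm_add_sq_real w (z - w)
  have hzx := norm_add_sq_real (w - x0) (z - w)
  have hy : ⟪y, z⟫ = ⟪y, w⟫ + ⟪y, z - w⟫ := by rw [← inner_add_right, add_sub_cancel]
  rw [add_sub_cancel] at hz
  rw [sub_add_sub_cancel'] at hzx
  rw [inner_add_left, inner_sub_left, real_inner_smul_left, real_inner_smul_left, hz, hzx, hy]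
  ring

theorem smul_sub_eq_of_eq_sub_one_div_smul {c : ℝ} (hc : c ≠ 0) {u v w : E}
    (h : v = u - (1 / c) • w) : c • (u - v) = w := by
  rw [h, sub_sub_cancel, smul_smul, mul_one_div_cancel hc, one_smul]

end InnerProduct

section ForwardBackward

variable {E : Type*} [NormedAddCommGroup E] [InnerProductSpace ℝ E]
  {G h : E → ℝ} {g D : E → E} {K μ c : ℝ}
  (hG : ∀ u w, G u + ⟪g u, w - u⟫ ≤ G w) (hg : ∀ u, ‖g u‖ ^ 2 ≤ K)
  (hh : ∀ w z, h w + ⟪D w, z - w⟫ + μ / 2 * ‖z - w‖ ^ 2 ≤ h z)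
include hG hg hh

theorem forwardBackward_step_le (hc : 0 < c) {u v : E} (hstep : c • (u - v) = g u + D v)
    (x : E) :
    G v + h v - (G x + h x) ≤
      2 * K / c + c / 2 * (‖u - x‖ ^ 2 - ‖v - x‖ ^ 2) - μ / 2 * ‖v - x‖ ^ 2 := by
  have hGv := hG v u
  have hGu := hG u x
  have hhv := hh v x
  have hsplit : ⟪g u, x - u⟫ = ⟪g u, x - v⟫ - ⟪g u, u - v⟫ := by
    rw [← inner_sub_right, sub_sub_sub_cancel_right]
  have hdir : ⟪g u, x - v⟫ + ⟪D v, x - v⟫ = c * ⟪u - v, x - v⟫ := by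
    rw [← inner_add_left, ← hstep, real_inner_smul_left]
  have hthree : c / 2 * ‖u - x‖ ^ 2 =
      c / 2 * ‖u - v‖ ^ 2 - c * ⟪u - v, x - v⟫ + c / 2 * ‖x - v‖ ^ 2 := by
    rw [← sub_sub_sub_cancel_right u x v, norm_sub_sq_real]
    ring
  have hyu := real_inner_le_young hc (g u) (u - v)
  have hyv := real_inner_le_young hc (-g v) (u - v)
  rw [inner_neg_left, norm_neg] at hyv
  have hKu : ‖g u‖ ^ 2 / c ≤ K / c := div_le_div_of_nonneg_right (hg u) hc.le
  have hKv : ‖g v‖ ^ 2 / c ≤ K / c := div_le_div_of_nonneg_right (hg v) hc.le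
  rw [norm_sub_rev v x]
  linear_combination hGv + hGu + hhv + hyu + hyv + hKu + hKv - hsplit - hdir - hthree

theorem forwardBackward_sum_le (hc : 0 < c) {xs : ℕ → E} {T : ℕ}
    (hstep : ∀ t < T, c • (xs t - xs (t + 1)) = g (xs t) + D (xs (t + 1))) (x : E) :
    ∑ t ∈ Finset.range T, (G (xs (t + 1)) + h (xs (t + 1)) - (G x + h x)) ≤
      T * (2 * K / c) + c / 2 * (‖xs 0 - x‖ ^ 2 - ‖xs T - x‖ ^ 2)
        - μ / 2 * ∑ t ∈ Finset.range T, ‖xs (t + 1) - x‖ ^ 2 := by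
  calc _ ≤ ∑ t ∈ Finset.range T, (2 * K / c + c / 2 * (‖xs t - x‖ ^ 2 - ‖xs (t + 1) - x‖ ^ 2)
          - μ / 2 * ‖xs (t + 1) - x‖ ^ 2) :=
        Finset.sum_le_sum fun t ht =>
          forwardBackward_step_le hG hg hh hc (hstep t (Finset.mem_range.mp ht)) x
    _ = _ := by
        rw [Finset.sum_sub_distrib, Finset.sum_add_distrib, ← Finset.mul_sum, ← Finset.mul_sum,
          Finset.sum_range_sub' fun t => ‖xs t - x‖ ^ 2, Finset.sum_const, Finset.card_range,
          nsmul_eq_mul]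

theorem forwardBackward_average_le (hc : 0 < c) (hμ : 0 ≤ μ) {xs : ℕ → E} {T : ℕ} (hT : 0 < T)
    (hstep : ∀ t < T, c • (xs t - xs (t + 1)) = g (xs t) + D (xs (t + 1)))
    {xbar : E} (hxbar : xbar = (T : ℝ)⁻¹ • ∑ t ∈ Finset.Icc 1 T, xs t) (x : E) :
    G xbar + h xbar - (G x + h x) ≤
      2 * K / c + c / (2 * T) * (‖xs 0 - x‖ ^ 2 - ‖xs T - x‖ ^ 2) - μ / 2 * ‖xbar - x‖ ^ 2 := by
  have hT' : (0 : ℝ) < T := Nat.cast_pos.mpr hT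
  have hmean : ∑ t ∈ Finset.range T, xs (t + 1) = ((Finset.range T).card : ℝ) • xbar := by
    rw [hxbar, Finset.card_range, smul_smul, mul_inv_cancel₀ hT'.ne', one_smul,
      Finset.range_eq_Ico, Finset.sum_Ico_add' xs, zero_add, Finset.Ico_add_one_right_eq_Icc]
  have hφ : ∀ z, G xbar + h xbar + ⟪g xbar + D xbar, z - xbar⟫ ≤ G z + h z := fun z => by
    have := hh xbar z
    rw [inner_add_left]
    nlinarith [hG xbar z, sq_nonneg ‖z - xbar‖]
  have hjensen := card_mul_le_sum_of_subgradient (φ := fun z => G z + h z) _ _ hmean hφ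
  have hjensen_sq := card_mul_le_sum_of_subgradient (φ := fun z => ‖z - x‖ ^ 2) _ _ hmean
    (norm_sub_sq_add_inner_le x xbar)
  have hsum := forwardBackward_sum_le hG hg hh hc hstep x
  rw [Finset.card_range] at hjensen hjensen_sq
  rw [Finset.sum_sub_distrib, Finset.sum_const, Finset.card_range, nsmul_eq_mul] at hsum
  refine le_of_mul_le_mul_left ?_ hT'
  have hrhs : (T : ℝ) * (2 * K / c + c / (2 * T) * (‖xs 0 - x‖ ^ 2 - ‖xs T - x‖ ^ 2)
      - μ / 2 * ‖xbar - x‖ ^ 2) = T * (2 * K / c) + c / 2 * (‖xs 0 - x‖ ^ 2 - ‖xs T - x‖ ^ 2)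
        - μ / 2 * (T * ‖xbar - x‖ ^ 2) := by
    field_simp
  rw [hrhs]
  linear_combination
    hsum + hjensen + mul_le_mul_of_nonneg_left hjensen_sq (by positivity : 0 ≤ μ / 2)

end ForwardBackward

section Separable

variable {d n : ℕ} {f : Fin n → EuclideanSpace ℝ (Fin d) → ℝ}
  {gf : Fin n → EuclideanSpace ℝ (Fin d) → EuclideanSpace ℝ (Fin d)}

theorem sum_add_inner_gvec_le (hgf : ∀ i u x', f i x' ≥ f i u + ⟪gf i u, x' - u⟫)
    (u w : Vec d n) :
    ∑ i, f i (u i) + ⟪gvec gf u, w - u⟫ ≤ ∑ i, f i (w i) := by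
  rw [PiLp.inner_apply, ← Finset.sum_add_distrib]
  exact Finset.sum_le_sum fun i _ => hgf i (u i) (w i)

theorem norm_gvec_sq_le {M : ℝ} (hlip : ∀ i x x', |f i x - f i x'| ≤ M * ‖x - x'‖)
    (hgf : ∀ i u x', f i x' ≥ f i u + ⟪gf i u, x' - u⟫) (u : Vec d n) :
    ‖gvec gf u‖ ^ 2 ≤ n * M ^ 2 := by
  rw [PiLp.norm_sq_eq_of_L2]
  calc ∑ i, ‖gf i (u i)‖ ^ 2 ≤ ∑ _i : Fin n, M ^ 2 :=
        Finset.sum_le_sum fun i _ => norm_sq_le_of_lipschitz_of_subgradient (hlip i) (hgf i (u i))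
    _ = n * M ^ 2 := by simp

end Separable

theorem stmt15_general (d n : ℕ) (M : ℝ)
    (f : Fin n → EuclideanSpace ℝ (Fin d) → ℝ)
    (hlip : ∀ i x x', |f i x - f i x'| ≤ M * ‖x - x'‖)
    (gf : Fin n → EuclideanSpace ℝ (Fin d) → EuclideanSpace ℝ (Fin d))
    (hgf : ∀ i u x', f i x' ≥ f i u + ⟪gf i u, x' - u⟫)
    (rx τx : ℝ) (hrx : 0 ≤ rx) (hτx : 0 < τx)
    (T : ℕ) (hT : 1 ≤ T)
    (ηx β σ : ℝ) (hηx : ηx = 1 / (τx * T)) (hβ : β = rx) (hσ : σ = τx / (2 * τx + β))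
    (F : Vec d n → ℝ)
    (hF : ∀ x, F x = (∑ i, f i (x i)) + (rx / 2) * ‖x‖ ^ 2)
    (x0 y : Vec d n)
    (xs : ℕ → Vec d n) (hxs0 : xs 0 = x0)
    (hxs : ∀ t < T, xs (t + 1) =
      xs t - ηx • (gvec gf (xs t) + β • xs (t + 1) - y + τx • (xs (t + 1) - x0)))
    (xtil xplus : Vec d n)
    (hxtil : xtil = (T : ℝ)⁻¹ • ∑ t ∈ Finset.Icc 1 T, xs t)
    (hxplus : xplus = σ • xs T + (1 - σ) • xtil) :
    ∀ x : Vec d n,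
      (τx + rx / 2) * ‖xplus - x‖ ^ 2 ≤
        τx * ‖x0 - x‖ ^ 2 + 2 * n * M ^ 2 / (τx * T)
          - (F xtil - F x - ⟪y, xtil - x⟫ + (τx / 2) * ‖xtil - x0‖ ^ 2) := by
  intro x
  subst hβ
  have hstep : ∀ t < T, (τx * T) • (xs t - xs (t + 1)) =
      gvec gf (xs t) + (β • xs (t + 1) - y + τx • (xs (t + 1) - x0)) := fun t ht => by
    rw [smul_sub_eq_of_eq_sub_one_div_smul (by positivity) (hηx ▸ hxs t ht)]
    abel
  have havg := forwardBackward_average_le (G := fun z => ∑ i, f i (z i))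
    (h := fun z => β / 2 * ‖z‖ ^ 2 - ⟪y, z⟫ + τx / 2 * ‖z - x0‖ ^ 2)
    (D := fun w => β • w - y + τx • (w - x0)) (μ := β + τx)
    (sum_add_inner_gvec_le hgf) (norm_gvec_sq_le hlip hgf)
    (fun w z => by linarith [quadratic_sub_eq β τx y x0 w z])
    (by positivity) (by positivity) hT hstep hxtil x
  rw [show τx * T / (2 * T) = τx / 2 by field_simp, hxs0, norm_sub_rev x x0] at havg
  have hweight : σ * (τx / 2 + (β + τx) / 2) = τx / 2 := by
    rw [hσ]
    field_simp
    ring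
  have hcomb := add_mul_norm_sub_sq_le (by positivity) (by positivity) (by positivity) hweight
    (xs T) xtil x
  rw [← hxplus] at hcomb
  rw [hF, hF, inner_sub_right]
  linear_combination havg + hcomb

theorem stmt15 (d n : ℕ) (hd : 1 ≤ d) (hn : 1 ≤ n) (M : ℝ) (hM : 0 ≤ M)
    (f : Fin n → EuclideanSpace ℝ (Fin d) → ℝ)
    (hconv : ∀ i, ConvexOn ℝ Set.univ (f i))
    (hlip : ∀ i x x', |f i x - f i x'| ≤ M * ‖x - x'‖)
    (gf : Fin n → EuclideanSpace ℝ (Fin d) → EuclideanSpace ℝ (Fin d))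
    (hgf : ∀ i u x', f i x' ≥ f i u + ⟪gf i u, x' - u⟫)
    (rx τx : ℝ) (hrx : 0 ≤ rx) (hτx : 0 < τx)
    (T : ℕ) (hT : 1 ≤ T)
    (ηx β σ : ℝ) (hηx : ηx = 1 / (τx * T)) (hβ : β = rx) (hσ : σ = τx / (2 * τx + β))
    (F : Vec d n → ℝ)
    (hF : ∀ x, F x = (∑ i, f i (x i)) + (rx / 2) * ‖x‖ ^ 2)
    (x0 y : Vec d n)
    (xs : ℕ → Vec d n) (hxs0 : xs 0 = x0)
    (hxs : ∀ t < T, xs (t + 1) =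
      xs t - ηx • (gvec gf (xs t) + β • xs (t + 1) - y + τx • (xs (t + 1) - x0)))
    (xtil xplus : Vec d n)
    (hxtil : xtil = (T : ℝ)⁻¹ • ∑ t ∈ Finset.Icc 1 T, xs t)
    (hxplus : xplus = σ • xs T + (1 - σ) • xtil) :
    ∀ x : Vec d n,
      (τx + rx / 2) * ‖xplus - x‖ ^ 2 ≤
        τx * ‖x0 - x‖ ^ 2 + 2 * n * M ^ 2 / (τx * T)
          - (F xtil - F x - ⟪y, xtil - x⟫ + (τx / 2) * ‖xtil - x0‖ ^ 2) :=
  stmt15_general d n M f hlip gf hgf rx τx hrx hτx T hT ηx β σ hηx hβ hσ F hF x0 y xs hxs0 hxs xtil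
    xplus hxtil hxplus
end
end

section
/- Let d, n ≥ 1, M ≥ 0, let each f_i : ℝ^d → ℝ be convex and M-Lipschitz, let r > 0 and r_x, r_yz > 0 with r_x + 1/r_yz = r. Let x* be the unique minimizer of p and set w* = (x*,…,x*). Then for every x_a = (x_{a,1},…,x_{a,n}) ∈ (ℝ^d)^n, the point x_o = (1/n)∑_{i=1}^n x_{a,i} ∈ ℝ^d satisfies n·(p(x_o) − p(x*)) ≤ F(x_a) − F(w*) + (1/(2r_yz))‖x_a‖² − (1/(2r_yz))‖w*‖² + √n·M·‖x_a‖_P. -/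
open scoped BigOperators RealInnerProductSpace

noncomputable section

/-- The orthogonal projection `P` of `(ℝ^d)^n` onto
`L⊥ = {(x_1,…,x_n) : ∑ x_i = 0}`: `(Px)_i = x_i − (1/n)∑_j x_j`. -/
def projL {d n : ℕ} (x : Vec d n) : Vec d n :=
  (WithLp.equiv 2 (∀ _ : Fin n, EuclideanSpace ℝ (Fin d))).symm
    fun i => x i - (n : ℝ)⁻¹ • ∑ j, x j

theorem stmt17 (d n : ℕ) (hd : 1 ≤ d) (hn : 1 ≤ n) (M : ℝ) (hM : 0 ≤ M)
    (f : Fin n → EuclideanSpace ℝ (Fin d) → ℝ)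
    (hconv : ∀ i, ConvexOn ℝ Set.univ (f i))
    (hlip : ∀ i x x', |f i x - f i x'| ≤ M * ‖x - x'‖)
    (r rx ryz : ℝ) (hr : 0 < r) (hrx : 0 < rx) (hryz : 0 < ryz)
    (hsum : rx + 1 / ryz = r)
    (p : EuclideanSpace ℝ (Fin d) → ℝ)
    (hp : ∀ x, p x = (n : ℝ)⁻¹ * (∑ i, f i x) + (r / 2) * ‖x‖ ^ 2)
    (F : Vec d n → ℝ) (hF : ∀ x, F x = (∑ i, f i (x i)) + (rx / 2) * ‖x‖ ^ 2)
    (xstar : EuclideanSpace ℝ (Fin d))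
    (hmin : ∀ x, p xstar ≤ p x)
    (huniq : ∀ x, (∀ x', p x ≤ p x') → x = xstar)
    (wstar : Vec d n)
    (hw : wstar = (WithLp.equiv 2 (∀ _ : Fin n, EuclideanSpace ℝ (Fin d))).symm
      fun _ => xstar) :
    ∀ xa : Vec d n,
      (n : ℝ) * (p ((n : ℝ)⁻¹ • ∑ i, xa i) - p xstar) ≤
        F xa - F wstar + (1 / (2 * ryz)) * ‖xa‖ ^ 2 - (1 / (2 * ryz)) * ‖wstar‖ ^ 2
          + Real.sqrt n * M * ‖projL xa‖ := by
  intro xa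
  have hn0 : (0:ℝ) < n := by exact_mod_cast hn
  set xo : EuclideanSpace ℝ (Fin d) := (n:ℝ)⁻¹ • ∑ i, xa i with hxo
  have hPnorm : ‖projL xa‖^2 = ∑ i, ‖xa i - xo‖^2 := by
    rw [projL, PiLp.norm_sq_eq_of_L2]
    rfl
  have hxanorm : ‖xa‖^2 = ∑ i, ‖xa i‖^2 := PiLp.norm_sq_eq_of_L2 _ xa
  have hwnorm : ‖wstar‖^2 = n * ‖xstar‖^2 := by
    rw [hw, PiLp.norm_sq_eq_of_L2]
    simp [Finset.sum_const, Finset.card_univ, mul_comm]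
  have hwi : ∀ i, wstar i = xstar := by
    intro i; rw [hw]; rfl
  -- B : n * ‖xo‖^2 ≤ ‖xa‖^2
  have hB : (n:ℝ) * ‖xo‖^2 ≤ ‖xa‖^2 := by
    rw [hxanorm]
    set S := ∑ i, ‖xa i‖ with hS
    have h1 : ‖xo‖ ≤ (n:ℝ)⁻¹ * S := by
      rw [hxo, norm_smul]
      simp only [norm_inv, Real.norm_natCast]
      gcongr
      exact norm_sum_le _ _
    have h2 : S^2 ≤ (n:ℝ) * ∑ i, ‖xa i‖^2 := by
      have := sq_sum_le_card_mul_sum_sq (s := Finset.univ) (f := fun i : Fin n => ‖xa i‖)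
      simpa using this
    have h4 : (n:ℝ)⁻¹ * S^2 ≤ ∑ i, ‖xa i‖^2 := by
      rw [inv_mul_le_iff₀ hn0]; exact h2
    have h5 : ‖xo‖^2 ≤ ((n:ℝ)⁻¹ * S)^2 := pow_le_pow_left₀ (norm_nonneg _) h1 2
    calc (n:ℝ) * ‖xo‖^2 ≤ (n:ℝ) * ((n:ℝ)⁻¹ * S)^2 :=
          mul_le_mul_of_nonneg_left h5 hn0.le
      _ = ((n:ℝ) * (n:ℝ)⁻¹) * ((n:ℝ)⁻¹ * S^2) := by ring
      _ = (n:ℝ)⁻¹ * S^2 := by rw [mul_inv_cancel₀ hn0.ne', one_mul]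
      _ ≤ _ := h4
  -- A : ∑ f i xo ≤ ∑ f i (xa i) + √n * M * ‖projL xa‖
  have hA : ∑ i, f i xo ≤ (∑ i, f i (xa i)) + Real.sqrt n * M * ‖projL xa‖ := by
    have hsum' : ∑ i, (f i xo - f i (xa i)) ≤ M * ∑ i, ‖xa i - xo‖ := by
      rw [Finset.mul_sum]
      apply Finset.sum_le_sum
      intro i _
      have h := (abs_le.mp (hlip i xo (xa i))).2
      rwa [norm_sub_rev] at h
    have hcs : ∑ i, ‖xa i - xo‖ ≤ Real.sqrt n * ‖projL xa‖ := by
      have h2 : (∑ i, ‖xa i - xo‖)^2 ≤ (n:ℝ) * ‖projL xa‖^2 := by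
        rw [hPnorm]
        have := sq_sum_le_card_mul_sum_sq (s := Finset.univ)
          (f := fun i : Fin n => ‖xa i - xo‖)
        simpa using this
      have hnn : 0 ≤ ∑ i, ‖xa i - xo‖ := Finset.sum_nonneg fun i _ => norm_nonneg _
      have := Real.sqrt_le_sqrt h2
      rwa [Real.sqrt_sq hnn, Real.sqrt_mul (by positivity), Real.sqrt_sq (norm_nonneg _)] at this
    have h3 : ∑ i, (f i xo - f i (xa i)) ≤ M * (Real.sqrt n * ‖projL xa‖) :=
      hsum'.trans (mul_le_mul_of_nonneg_left hcs hM)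
    rw [Finset.sum_sub_distrib] at h3
    linarith
  -- arithmetic assembly
  have hpxo : (n:ℝ) * p xo = (∑ i, f i xo) + (n:ℝ) * (r/2) * ‖xo‖^2 := by
    rw [hp]; field_simp
  have hpxs : (n:ℝ) * p xstar = (∑ i, f i xstar) + (n:ℝ) * (r/2) * ‖xstar‖^2 := by
    rw [hp]; field_simp
  have hFw : F wstar = (∑ i, f i xstar) + (rx/2) * ‖wstar‖^2 := by
    rw [hF]
    simp only [hwi]
  have heq : 1/(2*ryz) = (r - rx)/2 := by
    have h1 : 1/ryz = r - rx := by linarith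
    have h2 : 1/(2*ryz) = (1/ryz)/2 := by ring
    rw [h2, h1]
  rw [mul_sub, hpxo, hpxs, hF xa, hFw, heq, hwnorm]
  have hB' : (r/2) * ((n:ℝ) * ‖xo‖^2) ≤ (r/2) * ‖xa‖^2 :=
    mul_le_mul_of_nonneg_left hB (by positivity)
  nlinarith [hA, hB']

end
end
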